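/- Let f : ℝ^d → ℝ be a piecewise affine function in min-max form with S(f) nonempty, and let V ⊆ ℝ^d satisfy liminf_{‖x‖→∞, x ∈ V} f(x)/‖x‖ > 0 (i.e. there exist r > 0 and a > 0 with f(x) ≥ a‖x‖ for all x ∈ V with ‖x‖ ≥ r). Then f has an error bound on V: there exists τ > 0 such that τ · dist(x, S(f)) ≤ max{f(x), 0} for all x ∈ V. -/

import Mathlib

open Finset

theorem conic_caratheodory {J : Type*} [Fintype J] {E : Type*} [AddCommGroup E] [Module ℝ E]
    (v : J → E) :
    ∀ (s : Finset J) (lam : J → ℝ), (∀ j ∈ s, 0 ≤ lam j) →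
    ∃ t ⊆ s, (LinearIndependent ℝ (fun j : {x : J // x ∈ t} => v j)) ∧
      ∃ mu : J → ℝ, (∀ j, 0 ≤ mu j) ∧ ∑ j ∈ t, mu j • v j = ∑ j ∈ s, lam j • v j := by
  classical
  intro s
  induction s using Finset.strongInduction with
  | _ s ih =>
    intro lam hlam
    by_cases hind : LinearIndependent ℝ (fun j : {x : J // x ∈ s} => v j)
    · refine ⟨s, Finset.Subset.refl s, hind, fun j => if h : j ∈ s then lam j else 0, ?_, ?_⟩
      · intro j
        by_cases h : j ∈ s
        · simp [h, hlam j h]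
        · simp [h]
      · apply Finset.sum_congr rfl
        intro j hj
        simp [hj]
    · -- get a nontrivial relation
      rw [Fintype.not_linearIndependent_iff] at hind
      obtain ⟨g, hgsum, i₀, hgi₀⟩ := hind
      -- extend g to J
      have key : ∀ gg : J → ℝ, (∑ j ∈ s, gg j • v j = 0) → (∃ j ∈ s, 0 < gg j) →
          ∃ t ⊆ s, (LinearIndependent ℝ (fun j : {x : J // x ∈ t} => v j)) ∧
          ∃ mu : J → ℝ, (∀ j, 0 ≤ mu j) ∧ ∑ j ∈ t, mu j • v j = ∑ j ∈ s, lam j • v j := by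
        intro gg hggsum ⟨j₁, hj₁s, hj₁pos⟩
        classical
        set P := s.filter (fun j => 0 < gg j) with hP
        have hPne : P.Nonempty := ⟨j₁, Finset.mem_filter.2 ⟨hj₁s, hj₁pos⟩⟩
        obtain ⟨j₀, hj₀P, hj₀min⟩ := Finset.exists_mem_eq_inf' hPne (fun j => lam j / gg j)
        set r := P.inf' hPne (fun j => lam j / gg j) with hr
        have hj₀s : j₀ ∈ s := (Finset.mem_filter.1 hj₀P).1
        have hj₀pos : 0 < gg j₀ := (Finset.mem_filter.1 hj₀P).2
        have hrnonneg : 0 ≤ r := by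
          rw [hr, Finset.le_inf'_iff]
          intro j hj
          have := Finset.mem_filter.1 hj
          exact div_nonneg (hlam j this.1) this.2.le
        set lam' : J → ℝ := fun j => lam j - r * gg j with hlam'
        have hlam'nonneg : ∀ j ∈ s, 0 ≤ lam' j := by
          intro j hjs
          by_cases hgj : 0 < gg j
          · have hjP : j ∈ P := Finset.mem_filter.2 ⟨hjs, hgj⟩
            have : r ≤ lam j / gg j := Finset.inf'_le _ hjP
            simp only [hlam']
            rw [sub_nonneg]
            exact (le_div_iff₀ hgj).1 this
          · push_neg at hgj
            simp only [hlam']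
            have : r * gg j ≤ 0 := mul_nonpos_of_nonneg_of_nonpos hrnonneg hgj
            linarith [hlam j hjs]
        have hlam'j₀ : lam' j₀ = 0 := by
          simp only [hlam']
          rw [hj₀min, div_mul_cancel₀ _ (ne_of_gt hj₀pos)]
          ring
        have hsum' : ∑ j ∈ s, lam' j • v j = ∑ j ∈ s, lam j • v j := by
          simp only [hlam', sub_smul, Finset.sum_sub_distrib]
          rw [show ∑ j ∈ s, (r * gg j) • v j = r • ∑ j ∈ s, gg j • v j by
            rw [Finset.smul_sum]; apply Finset.sum_congr rfl; intro j _; rw [smul_smul]]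
          rw [hggsum, smul_zero, sub_zero]
        obtain ⟨t, hts, htind, mu, hmu, hmusum⟩ :=
          ih (s.erase j₀) (Finset.erase_ssubset hj₀s) lam' (fun j hj => hlam'nonneg j (Finset.mem_of_mem_erase hj))
        refine ⟨t, hts.trans (Finset.erase_subset _ _), htind, mu, hmu, ?_⟩
        rw [hmusum, Finset.sum_erase _ (by rw [hlam'j₀, zero_smul]), hsum']
      -- build gg with positive entry
      classical
      set gg : J → ℝ := fun j => if h : j ∈ s then g ⟨j, h⟩ else 0 with hgg
      have hggsum : ∑ j ∈ s, gg j • v j = 0 := by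
        rw [← hgsum, Finset.univ_eq_attach, ← Finset.sum_attach s (fun j => gg j • v j)]
        apply Finset.sum_congr rfl
        intro j _
        simp [hgg, j.2]
      have hggi₀ : gg i₀ ≠ 0 := by simp [hgg, i₀.2, hgi₀]
      by_cases hpos : ∃ j ∈ s, 0 < gg j
      · exact key gg hggsum hpos
      · push_neg at hpos
        apply key (fun j => -gg j)
        · simp only [neg_smul, Finset.sum_neg_distrib, hggsum, neg_zero]
        · refine ⟨i₀, i₀.2, ?_⟩
          have := hpos i₀ i₀.2
          simp only [neg_pos]
          exact lt_of_le_of_ne this hggi₀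

theorem indep_bound {J : Type*} [Fintype J] {E : Type*} [NormedAddCommGroup E]
    [NormedSpace ℝ E] (v : J → E) (t : Finset J)
    (hind : LinearIndependent ℝ (fun j : {x : J // x ∈ t} => v j)) :
    ∃ c > (0:ℝ), ∀ mu : J → ℝ, (∀ j ∈ t, 0 ≤ mu j) →
      ∑ j ∈ t, mu j ≤ c * ‖∑ j ∈ t, mu j • v j‖ := by
  classical
  rcases t.eq_empty_or_nonempty with rfl | ⟨j₁, hj₁⟩
  · exact ⟨1, one_pos, by simp⟩
  set Δ : Set (J → ℝ) := {mu | (∀ j, 0 ≤ mu j) ∧ (∀ j ∉ t, mu j = 0) ∧ ∑ j ∈ t, mu j = 1}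
    with hΔ
  have h1 : IsClosed {mu : J → ℝ | ∀ j, 0 ≤ mu j} := by
    have he : {mu : J → ℝ | ∀ j, 0 ≤ mu j} = ⋂ j, {mu : J → ℝ | 0 ≤ mu j} := by
      ext mu; simp [Set.mem_iInter]
    rw [he]
    exact isClosed_iInter fun j => isClosed_le continuous_const (continuous_apply j)
  have h2 : IsClosed {mu : J → ℝ | ∀ j ∉ t, mu j = 0} := by
    have he : {mu : J → ℝ | ∀ j ∉ t, mu j = 0}
        = ⋂ j, ⋂ (_ : j ∉ t), {mu : J → ℝ | mu j = 0} := by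
      ext mu; simp [Set.mem_iInter]
    rw [he]
    exact isClosed_iInter fun j => isClosed_iInter fun _ =>
      isClosed_eq (continuous_apply j) continuous_const
  have h3 : IsClosed {mu : J → ℝ | ∑ j ∈ t, mu j = 1} :=
    isClosed_eq (continuous_finset_sum t fun j _ => continuous_apply j) continuous_const
  have hΔclosed : IsClosed Δ := h1.inter (h2.inter h3)
  have hΔsub : Δ ⊆ Metric.closedBall 0 1 := by
    intro mu hmu
    rw [Metric.mem_closedBall, dist_zero_right]
    refine pi_norm_le_iff_of_nonneg zero_le_one |>.2 fun j => ?_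
    rw [Real.norm_eq_abs, abs_le]
    constructor
    · linarith [hmu.1 j]
    · by_cases hjt : j ∈ t
      · calc mu j ≤ ∑ k ∈ t, mu k :=
            Finset.single_le_sum (fun k hk => hmu.1 k) hjt
          _ = 1 := hmu.2.2
      · rw [hmu.2.1 j hjt]; exact zero_le_one
  have hΔcompact : IsCompact Δ :=
    (isCompact_closedBall (0 : J → ℝ) 1).of_isClosed_subset hΔclosed hΔsub
  have hΔne : Δ.Nonempty := by
    refine ⟨fun j => if j = j₁ then 1 else 0, fun j => by positivity, fun j hj => ?_, ?_⟩
    · simp only [ite_eq_right_iff]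
      intro h; exact absurd (h ▸ hj₁) hj
    · rw [Finset.sum_ite_eq' t j₁ (fun _ => (1:ℝ))]
      simp [hj₁]
  have hφcont : Continuous (fun mu : J → ℝ => ‖∑ j ∈ t, mu j • v j‖) := by
    exact (continuous_finset_sum t fun j _ => (continuous_apply j).smul continuous_const).norm
  obtain ⟨mu₀, hmu₀Δ, hmin⟩ := hΔcompact.exists_isMinOn hΔne hφcont.continuousOn
  set m := ‖∑ j ∈ t, mu₀ j • v j‖ with hm
  have hmpos : 0 < m := by
    rcases (norm_nonneg (∑ j ∈ t, mu₀ j • v j)).lt_or_eq with h | h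
    · exact h
    · exfalso
      have hz : ∑ j ∈ t, mu₀ j • v j = 0 := norm_eq_zero.1 h.symm
      have : ∀ j ∈ t, mu₀ j = 0 := by
        have h2 : ∑ i : {x : J // x ∈ t}, mu₀ i.1 • v i.1 = 0 := by
          rw [Finset.univ_eq_attach, Finset.sum_attach t (fun j => mu₀ j • v j)]
          exact hz
        have := Fintype.linearIndependent_iff.1 hind (fun i => mu₀ i.1) h2
        intro j hj
        exact this ⟨j, hj⟩
      have hs0 : ∑ j ∈ t, mu₀ j = 0 := Finset.sum_eq_zero this
      rw [hmu₀Δ.2.2] at hs0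
      exact one_ne_zero hs0
  refine ⟨m⁻¹, inv_pos.2 hmpos, fun mu hmu => ?_⟩
  set S := ∑ j ∈ t, mu j with hSdef
  have hS0 : 0 ≤ S := Finset.sum_nonneg hmu
  rcases eq_or_lt_of_le hS0 with h | hSpos
  · rw [← h]; positivity
  · set ν : J → ℝ := fun j => if j ∈ t then mu j / S else 0 with hν
    have hνΔ : ν ∈ Δ := by
      refine ⟨fun j => ?_, fun j hj => by simp [hν, hj], ?_⟩
      · by_cases hjt : j ∈ t
        · simp only [hν, if_pos hjt]
          exact div_nonneg (hmu j hjt) hS0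
        · simp [hν, hjt]
      · rw [Finset.sum_congr rfl (fun j hj => if_pos hj), ← Finset.sum_div, div_self (ne_of_gt hSpos)]
    have hφν : m ≤ ‖∑ j ∈ t, ν j • v j‖ := hmin hνΔ
    have heq : ∑ j ∈ t, ν j • v j = S⁻¹ • ∑ j ∈ t, mu j • v j := by
      rw [Finset.smul_sum]
      apply Finset.sum_congr rfl
      intro j hj
      simp only [hν, if_pos hj, smul_smul, div_eq_inv_mul]
    rw [heq, norm_smul, Real.norm_eq_abs, abs_of_pos (inv_pos.2 hSpos)] at hφν
    have hm0 : m ≠ 0 := hmpos.ne'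
    have hS0' : S ≠ 0 := hSpos.ne'
    calc S = m⁻¹ * (m * S) := by field_simp
      _ ≤ m⁻¹ * ‖∑ j ∈ t, mu j • v j‖ := by
          have hkey : m * S ≤ ‖∑ j ∈ t, mu j • v j‖ := by
            calc m * S ≤ S⁻¹ * ‖∑ j ∈ t, mu j • v j‖ * S :=
                  mul_le_mul_of_nonneg_right hφν hS0
              _ = ‖∑ j ∈ t, mu j • v j‖ := by field_simp
          exact mul_le_mul_of_nonneg_left hkey (inv_nonneg.2 hmpos.le)

theorem cone_rep_bound {J : Type*} [Fintype J] {E : Type*} [NormedAddCommGroup E]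
    [NormedSpace ℝ E] (v : J → E) :
    ∃ c > (0:ℝ), ∀ (s : Finset J) (lam : J → ℝ), (∀ j ∈ s, 0 ≤ lam j) →
      ∃ mu : J → ℝ, (∀ j, 0 ≤ mu j) ∧ (∀ j ∉ s, mu j = 0) ∧
        ∑ j ∈ s, mu j • v j = ∑ j ∈ s, lam j • v j ∧
        ∑ j ∈ s, mu j ≤ c * ‖∑ j ∈ s, lam j • v j‖ := by
  classical
  have hA : ∀ t : Finset J, ∃ c > (0:ℝ),
      (LinearIndependent ℝ (fun j : {x : J // x ∈ t} => v j)) →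
      ∀ mu : J → ℝ, (∀ j ∈ t, 0 ≤ mu j) → ∑ j ∈ t, mu j ≤ c * ‖∑ j ∈ t, mu j • v j‖ := by
    intro t
    by_cases h : LinearIndependent ℝ (fun j : {x : J // x ∈ t} => v j)
    · obtain ⟨c, hc, hcb⟩ := indep_bound v t h
      exact ⟨c, hc, fun _ => hcb⟩
    · exact ⟨1, one_pos, fun h' => absurd h' h⟩
  choose cf hcfpos hcf using hA
  have hne : (Finset.univ : Finset (Finset J)).Nonempty := ⟨∅, Finset.mem_univ _⟩
  set c := Finset.univ.sup' hne cf with hc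
  have hcpos : 0 < c := lt_of_lt_of_le (hcfpos ∅) (Finset.le_sup' cf (Finset.mem_univ ∅))
  refine ⟨c, hcpos, fun s lam hlam => ?_⟩
  obtain ⟨t, hts, htind, mu, hmu, hmusum⟩ := conic_caratheodory v s lam hlam
  set mu' : J → ℝ := fun j => if j ∈ t then mu j else 0 with hmu'
  have hsum_eq : ∀ (f : J → E), ∑ j ∈ s, (if j ∈ t then f j else 0) = ∑ j ∈ t, f j := by
    intro f
    rw [Finset.sum_ite_mem s t f, Finset.inter_eq_right.2 hts]
  have hsum_eq' : ∑ j ∈ s, mu' j = ∑ j ∈ t, mu j := by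
    simp only [hmu']
    rw [Finset.sum_ite_mem s t mu, Finset.inter_eq_right.2 hts]
  refine ⟨mu', fun j => ?_, fun j hj => ?_, ?_, ?_⟩
  · by_cases hjt : j ∈ t
    · simp [hmu', hjt, hmu j]
    · simp [hmu', hjt]
  · simp only [hmu', ite_eq_right_iff]
    intro hjt
    exact absurd (hts hjt) hj
  · have : ∑ j ∈ s, mu' j • v j = ∑ j ∈ t, mu j • v j := by
      have := hsum_eq (fun j => mu j • v j)
      rw [← this]
      apply Finset.sum_congr rfl
      intro j hj
      by_cases hjt : j ∈ t <;> simp [hmu', hjt]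
    rw [this, hmusum]
  · rw [hsum_eq', ← hmusum]
    calc ∑ j ∈ t, mu j ≤ cf t * ‖∑ j ∈ t, mu j • v j‖ :=
          hcf t htind mu (fun j _ => hmu j)
      _ ≤ c * ‖∑ j ∈ t, mu j • v j‖ := by
          apply mul_le_mul_of_nonneg_right (Finset.le_sup' cf (Finset.mem_univ t)) (norm_nonneg _)

theorem cone_closed {J : Type*} [Fintype J] {E : Type*} [NormedAddCommGroup E]
    [NormedSpace ℝ E] (v : J → E) (s : Finset J) :
    IsClosed {w : E | ∃ lam : J → ℝ, (∀ j ∈ s, 0 ≤ lam j) ∧ w = ∑ j ∈ s, lam j • v j} := by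
  classical
  set C := {w : E | ∃ lam : J → ℝ, (∀ j ∈ s, 0 ≤ lam j) ∧ w = ∑ j ∈ s, lam j • v j} with hC
  obtain ⟨c, hcpos, hcb⟩ := cone_rep_bound v
  apply isClosed_of_closure_subset
  intro w hw
  set R := ‖w‖ + 1 with hR
  have hRpos : 0 < R := by positivity
  set K : Set (J → ℝ) := {mu | (∀ j, 0 ≤ mu j) ∧ (∀ j ∉ s, mu j = 0) ∧ ∑ j ∈ s, mu j ≤ c * R}
    with hK
  set L : (J → ℝ) → E := fun mu => ∑ j ∈ s, mu j • v j with hL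
  have hLcont : Continuous L :=
    continuous_finset_sum s fun j _ => (continuous_apply j).smul continuous_const
  have hKclosed : IsClosed K := by
    have h1 : IsClosed {mu : J → ℝ | ∀ j, 0 ≤ mu j} := by
      have he : {mu : J → ℝ | ∀ j, 0 ≤ mu j} = ⋂ j, {mu : J → ℝ | 0 ≤ mu j} := by
        ext mu; simp [Set.mem_iInter]
      rw [he]
      exact isClosed_iInter fun j => isClosed_le continuous_const (continuous_apply j)
    have h2 : IsClosed {mu : J → ℝ | ∀ j ∉ s, mu j = 0} := by
      have he : {mu : J → ℝ | ∀ j ∉ s, mu j = 0}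
          = ⋂ j, ⋂ (_ : j ∉ s), {mu : J → ℝ | mu j = 0} := by
        ext mu; simp [Set.mem_iInter]
      rw [he]
      exact isClosed_iInter fun j => isClosed_iInter fun _ =>
        isClosed_eq (continuous_apply j) continuous_const
    have h3 : IsClosed {mu : J → ℝ | ∑ j ∈ s, mu j ≤ c * R} :=
      isClosed_le (continuous_finset_sum s fun j _ => continuous_apply j) continuous_const
    exact h1.inter (h2.inter h3)
  have hKbdd : K ⊆ Metric.closedBall 0 (c * R) := by
    intro mu hmu
    rw [Metric.mem_closedBall, dist_zero_right]
    refine pi_norm_le_iff_of_nonneg (by positivity) |>.2 fun j => ?_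
    rw [Real.norm_eq_abs, abs_le]
    refine ⟨by nlinarith [hmu.1 j, mul_pos hcpos hRpos], ?_⟩
    by_cases hjs : j ∈ s
    · calc mu j ≤ ∑ k ∈ s, mu k := Finset.single_le_sum (fun k _ => hmu.1 k) hjs
        _ ≤ c * R := hmu.2.2
    · rw [hmu.2.1 j hjs]; positivity
  have hKcompact : IsCompact K :=
    (isCompact_closedBall (0 : J → ℝ) (c * R)).of_isClosed_subset hKclosed hKbdd
  have himg : IsCompact (L '' K) := hKcompact.image hLcont
  -- w is in the closure of C ∩ closedBall 0 R
  have hwcl : w ∈ closure (C ∩ Metric.closedBall 0 R) := by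
    rw [Metric.mem_closure_iff]
    intro ε hε
    rw [Metric.mem_closure_iff] at hw
    obtain ⟨z, hzC, hzd⟩ := hw (min ε 1) (lt_min hε one_pos)
    refine ⟨z, ⟨hzC, ?_⟩, lt_of_lt_of_le hzd (min_le_left _ _)⟩
    rw [Metric.mem_closedBall, dist_zero_right]
    have : dist w z < 1 := lt_of_lt_of_le hzd (min_le_right _ _)
    calc ‖z‖ ≤ ‖w‖ + ‖z - w‖ := by
          have := norm_add_le (w) (z - w); simpa using this
      _ ≤ ‖w‖ + 1 := by
          rw [← dist_eq_norm']
          linarith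
  have hsub : C ∩ Metric.closedBall 0 R ⊆ L '' K := by
    rintro z ⟨hzC, hzB⟩
    obtain ⟨lam, hlam, hzeq⟩ := hzC
    obtain ⟨mu, hmu1, hmu2, hmu3, hmu4⟩ := hcb s lam hlam
    refine ⟨mu, ⟨hmu1, hmu2, ?_⟩, ?_⟩
    · rw [Metric.mem_closedBall, dist_zero_right] at hzB
      calc ∑ j ∈ s, mu j ≤ c * ‖∑ j ∈ s, lam j • v j‖ := hmu4
        _ = c * ‖z‖ := by rw [← hzeq]
        _ ≤ c * R := mul_le_mul_of_nonneg_left (le_trans hzB (by linarith)) hcpos.le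
    · rw [hL]; simp only; rw [hmu3, ← hzeq]
  have : w ∈ L '' K := by
    have hcl : closure (C ∩ Metric.closedBall 0 R) ⊆ L '' K := by
      apply closure_minimal hsub himg.isClosed
    exact hcl hwcl
  obtain ⟨mu, hmuK, hmueq⟩ := this
  exact ⟨mu, fun j _ => hmuK.1 j, hmueq.symm⟩

open scoped RealInnerProductSpace

theorem farkas_lemma {J : Type*} [Fintype J] {E : Type*} [NormedAddCommGroup E]
    [InnerProductSpace ℝ E] [CompleteSpace E] (v : J → E) (s : Finset J) (w : E)
    (hw : ∀ h : E, (∀ j ∈ s, ⟪v j, h⟫ ≤ 0) → ⟪w, h⟫ ≤ 0) :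
    ∃ lam : J → ℝ, (∀ j ∈ s, 0 ≤ lam j) ∧ w = ∑ j ∈ s, lam j • v j := by
  classical
  set C := {w : E | ∃ lam : J → ℝ, (∀ j ∈ s, 0 ≤ lam j) ∧ w = ∑ j ∈ s, lam j • v j} with hCdef
  by_contra hcon
  have hwC : w ∉ C := hcon
  set K : ConvexCone ℝ E :=
    { carrier := C
      smul_mem' := by
        rintro t ht z ⟨lam, hlam, rfl⟩
        refine ⟨fun j => t * lam j, fun j hj => mul_nonneg ht.le (hlam j hj), ?_⟩
        rw [Finset.smul_sum]
        apply Finset.sum_congr rfl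
        intro j _
        rw [smul_smul]
      add_mem' := by
        rintro z₁ ⟨lam₁, hlam₁, rfl⟩ z₂ ⟨lam₂, hlam₂, rfl⟩
        refine ⟨fun j => lam₁ j + lam₂ j, fun j hj => add_nonneg (hlam₁ j hj) (hlam₂ j hj), ?_⟩
        rw [← Finset.sum_add_distrib]
        apply Finset.sum_congr rfl
        intro j _
        rw [add_smul] } with hK
  have hKne : (K : Set E).Nonempty := ⟨0, fun j => (0:ℝ), fun j _ => le_refl 0, by simp⟩
  have hKclosed : IsClosed (K : Set E) := cone_closed v s
  obtain ⟨y, hy1, hy2⟩ := ProperCone.hyperplane_separation' (C := ({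
      carrier := C
      zero_mem' := ⟨fun j => (0:ℝ), fun j _ => le_refl 0, by simp⟩
      add_mem' := fun {a b} ha hb => K.add_mem' ha hb
      smul_mem' := by
        rintro c z ⟨lam, hlam, rfl⟩
        refine ⟨fun j => (c:ℝ) * lam j, fun j hj => mul_nonneg c.2 (hlam j hj), ?_⟩
        change (c:ℝ) • ∑ j ∈ s, lam j • v j = _
        rw [Finset.smul_sum]
        apply Finset.sum_congr rfl
        intro j _
        rw [smul_smul]
      isClosed' := hKclosed } : ProperCone ℝ E)) hwC
  have hy1 : ∀ x ∈ K, 0 ≤ ⟪x, y⟫ := fun x hx => hy1 x hx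
  have hy2 : ⟪y, w⟫ < 0 := by rw [real_inner_comm]; exact hy2
  have hvy : ∀ j ∈ s, 0 ≤ ⟪v j, y⟫ := by
    intro j hj
    apply hy1
    refine ⟨fun k => if k = j then 1 else 0, fun k _ => by positivity, ?_⟩
    rw [show ∑ k ∈ s, (fun k => if k = j then (1:ℝ) else 0) k • v k
        = ∑ k ∈ s, (if k = j then v k else 0) by
      apply Finset.sum_congr rfl; intro k _; by_cases hk : k = j <;> simp [hk]]
    rw [Finset.sum_ite_eq' s j v]
    simp [hj]
  have := hw (-y) (fun j hj => by rw [inner_neg_right]; linarith [hvy j hj])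
  rw [inner_neg_right] at this
  rw [real_inner_comm] at hy2
  linarith

theorem hoffman {J : Type*} [Fintype J] [Nonempty J] {E : Type*} [NormedAddCommGroup E]
    [InnerProductSpace ℝ E] [CompleteSpace E] (a : J → ℝ) (v : J → E)
    (hS : {x : E | Finset.univ.sup' Finset.univ_nonempty (fun j => a j + ⟪v j, x⟫) ≤ 0}.Nonempty) :
    ∃ τ > (0:ℝ), ∀ x : E,
      τ * Metric.infDist x
          {y : E | Finset.univ.sup' Finset.univ_nonempty (fun j => a j + ⟪v j, y⟫) ≤ 0}
        ≤ max (Finset.univ.sup' Finset.univ_nonempty (fun j => a j + ⟪v j, x⟫)) 0 := by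
  classical
  set g : E → ℝ := fun x => Finset.univ.sup' Finset.univ_nonempty (fun j => a j + ⟪v j, x⟫)
    with hg
  set S : Set E := {x : E | g x ≤ 0} with hSdef
  have hjle : ∀ (x : E) (j : J), a j + ⟪v j, x⟫ ≤ g x := fun x j =>
    Finset.le_sup' (fun j => a j + ⟪v j, x⟫) (Finset.mem_univ j)
  have hgle : ∀ (x : E) (r : ℝ), (∀ j, a j + ⟪v j, x⟫ ≤ r) → g x ≤ r := fun x r h =>
    Finset.sup'_le _ _ (fun j _ => h j)
  have hSeq : S = ⋂ j, {x : E | a j + ⟪v j, x⟫ ≤ 0} := by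
    ext x
    simp only [hSdef, Set.mem_setOf_eq, Set.mem_iInter]
    constructor
    · intro h j; exact le_trans (hjle x j) h
    · intro h; exact hgle x 0 h
  have hinnercont : ∀ j : J, Continuous (fun x : E => ⟪v j, x⟫) := fun j =>
    Continuous.inner continuous_const continuous_id
  have hconv : Convex ℝ S := by
    rw [hSeq]
    apply convex_iInter
    intro j
    have : {x : E | a j + ⟪v j, x⟫ ≤ 0} = {x : E | ⟪v j, x⟫ ≤ -(a j)} := by
      ext x; simp only [Set.mem_setOf_eq]; constructor <;> intro h <;> linarith
    rw [this]
    exact convex_halfSpace_le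
      ⟨fun x y => inner_add_right _ _ _, fun c x => real_inner_smul_right _ _ _⟩ _
  have hclosed : IsClosed S := by
    rw [hSeq]
    exact isClosed_iInter fun j =>
      isClosed_le (continuous_const.add (hinnercont j)) continuous_const
  obtain ⟨c, hcpos, hcb⟩ := cone_rep_bound v
  refine ⟨c⁻¹, inv_pos.2 hcpos, fun x => ?_⟩
  by_cases hx : g x ≤ 0
  · rw [show Metric.infDist x S = 0 from Metric.infDist_zero_of_mem (show x ∈ S from hx), mul_zero]
    exact le_max_right _ _
  push_neg at hx
  obtain ⟨p, hpS, hpmin⟩ := exists_norm_eq_iInf_of_complete_convex hS hclosed.isComplete hconv x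
  have hproj : ∀ w ∈ S, ⟪x - p, w - p⟫ ≤ 0 :=
    (norm_eq_iInf_iff_real_inner_le_zero hconv hpS).1 hpmin
  have hdist : Metric.infDist x S = ‖x - p‖ := by
    rw [Metric.infDist_eq_iInf]
    rw [show (⨅ y : S, dist x y) = ⨅ y : S, ‖x - y‖ from iInf_congr fun y => dist_eq_norm x y]
    exact hpmin.symm
  set A : Finset J := Finset.univ.filter (fun j => a j + ⟪v j, p⟫ = 0) with hA
  have hAzero : ∀ j ∈ A, a j + ⟪v j, p⟫ = 0 := fun j hj => (Finset.mem_filter.1 hj).2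
  have hfarhyp : ∀ h : E, (∀ j ∈ A, ⟪v j, h⟫ ≤ 0) → ⟪x - p, h⟫ ≤ 0 := by
    intro h hh
    set B : Finset J := Finset.univ \ A with hB
    have hBneg : ∀ j ∈ B, a j + ⟪v j, p⟫ < 0 := by
      intro j hj
      rcases lt_or_eq_of_le (le_trans (hjle p j) hpS) with h' | h'
      · exact h'
      · exfalso
        have : j ∈ A := Finset.mem_filter.2 ⟨Finset.mem_univ j, h'⟩
        rw [hB, Finset.mem_sdiff] at hj
        exact hj.2 this
    have key : ∃ t : ℝ, 0 < t ∧ p + t • h ∈ S := by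
      by_cases hBne : B.Nonempty
      · set LV := Finset.univ.sup' Finset.univ_nonempty (fun j => ‖v j‖) with hLV
        have hLV0 : (0:ℝ) ≤ LV :=
          le_trans (norm_nonneg (v (Classical.arbitrary J)))
            (Finset.le_sup' (fun j => ‖v j‖) (Finset.mem_univ (Classical.arbitrary J)))
        set q : ℝ := LV * ‖h‖ with hq
        have hq0 : 0 ≤ q := mul_nonneg hLV0 (norm_nonneg h)
        set M := B.sup' hBne (fun j => a j + ⟪v j, p⟫) with hM
        have hMneg : M < 0 := by
          rw [hM, Finset.sup'_lt_iff]
          exact fun j hj => hBneg j hj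
        set t : ℝ := (-M) / (q + 1) with ht
        have htpos : 0 < t := div_pos (neg_pos.2 hMneg) (by positivity)
        refine ⟨t, htpos, ?_⟩
        apply hgle
        intro j
        have hexp : a j + ⟪v j, p + t • h⟫ = (a j + ⟪v j, p⟫) + t * ⟪v j, h⟫ := by
          rw [inner_add_right, real_inner_smul_right]; ring
        rw [hexp]
        by_cases hjA : j ∈ A
        · rw [hAzero j hjA, zero_add]
          exact mul_nonpos_of_nonneg_of_nonpos htpos.le (hh j hjA)
        · have hjB : j ∈ B := Finset.mem_sdiff.2 ⟨Finset.mem_univ j, hjA⟩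
          have h1 : a j + ⟪v j, p⟫ ≤ M := Finset.le_sup' (fun j => a j + ⟪v j, p⟫) hjB
          have h2 : ⟪v j, h⟫ ≤ q := by
            calc ⟪v j, h⟫ ≤ ‖v j‖ * ‖h‖ := real_inner_le_norm _ _
              _ ≤ LV * ‖h‖ :=
                mul_le_mul_of_nonneg_right (Finset.le_sup' (fun j => ‖v j‖) (Finset.mem_univ j)) (norm_nonneg h)
          have h3 : t * ⟪v j, h⟫ ≤ t * q := mul_le_mul_of_nonneg_left h2 htpos.le
          have h4 : t * q ≤ -M := by
            rw [ht, div_mul_eq_mul_div, div_le_iff₀ (by positivity)]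
            nlinarith [neg_pos.2 hMneg]
          linarith
      · refine ⟨1, one_pos, ?_⟩
        apply hgle
        intro j
        have hjA : j ∈ A := by
          by_contra hjA
          exact hBne ⟨j, Finset.mem_sdiff.2 ⟨Finset.mem_univ j, hjA⟩⟩
        have hexp : a j + ⟪v j, p + (1:ℝ) • h⟫ = (a j + ⟪v j, p⟫) + 1 * ⟪v j, h⟫ := by
          rw [inner_add_right, real_inner_smul_right]; ring
        rw [hexp, hAzero j hjA]
        linarith [hh j hjA]
    obtain ⟨t, htpos, htS⟩ := key
    have := hproj _ htS
    rw [add_sub_cancel_left, real_inner_smul_right] at this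
    nlinarith
  obtain ⟨lam, hlam, hxp⟩ := farkas_lemma v A (x - p) hfarhyp
  obtain ⟨mu, hmu1, hmu2, hmu3, hmu4⟩ := hcb A lam hlam
  have hxp' : x - p = ∑ j ∈ A, mu j • v j := by rw [hxp, hmu3]
  have hbound : ‖x - p‖ * ‖x - p‖ ≤ (c * ‖x - p‖) * g x := by
    have h1 : ⟪x - p, x - p⟫ = ∑ j ∈ A, mu j * ⟪v j, x - p⟫ := by
      nth_rewrite 1 [hxp']
      rw [sum_inner]
      exact Finset.sum_congr rfl fun j _ => real_inner_smul_left _ _ _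
    have h2 : ∀ j ∈ A, ⟪v j, x - p⟫ ≤ g x := by
      intro j hj
      have : ⟪v j, x - p⟫ = (a j + ⟪v j, x⟫) - (a j + ⟪v j, p⟫) := by
        rw [inner_sub_right]; ring
      rw [this, hAzero j hj, sub_zero]
      exact hjle x j
    have h3 : ∑ j ∈ A, mu j * ⟪v j, x - p⟫ ≤ (∑ j ∈ A, mu j) * g x := by
      rw [Finset.sum_mul]
      exact Finset.sum_le_sum fun j hj =>
        mul_le_mul_of_nonneg_left (h2 j hj) (hmu1 j)
    have h4 : (∑ j ∈ A, mu j) * g x ≤ (c * ‖∑ j ∈ A, lam j • v j‖) * g x :=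
      mul_le_mul_of_nonneg_right hmu4 hx.le
    have h5 : ‖∑ j ∈ A, lam j • v j‖ = ‖x - p‖ := by rw [← hxp]
    rw [← real_inner_self_eq_norm_mul_norm, h1]
    rw [h5] at h4
    linarith
  have hne : x ≠ p := by
    intro h
    rw [h] at hx
    exact absurd hpS (not_le.2 hx)
  have hnorm_pos : 0 < ‖x - p‖ := by
    rw [norm_pos_iff, sub_ne_zero]
    exact hne
  have hfinal : ‖x - p‖ ≤ c * g x := by
    have := mul_le_mul_of_nonneg_left hbound (le_of_lt (inv_pos.2 hnorm_pos))
    nlinarith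
  rw [hdist, max_eq_left hx.le, inv_mul_le_iff₀ hcpos]
  exact hfinal

theorem stmt_9 {d : ℕ} {ι : Type*} [Fintype ι] [Nonempty ι]
    {κ : ι → Type*} [∀ i, Fintype (κ i)] [∀ i, Nonempty (κ i)]
    (a : ∀ i, κ i → ℝ) (v : ∀ i, κ i → EuclideanSpace ℝ (Fin d))
    (f : EuclideanSpace ℝ (Fin d) → ℝ)
    (hf : ∀ x, f x = Finset.univ.inf' Finset.univ_nonempty
        (fun i => Finset.univ.sup' Finset.univ_nonempty (fun j => a i j + ⟪v i j, x⟫)))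
    (hS : {x | f x ≤ 0}.Nonempty)
    (V : Set (EuclideanSpace ℝ (Fin d)))
    (hgrowth : ∃ r > (0 : ℝ), ∃ c > (0 : ℝ), ∀ x ∈ V, r ≤ ‖x‖ → c * ‖x‖ ≤ f x) :
    ∃ τ > (0 : ℝ), ∀ x ∈ V, τ * Metric.infDist x {y | f y ≤ 0} ≤ max (f x) 0 := by
  classical
  obtain ⟨r, hr, c, hc, hgrow⟩ := hgrowth
  obtain ⟨x₀, hx₀⟩ := hS
  set S : Set (EuclideanSpace ℝ (Fin d)) := {y | f y ≤ 0} with hSdef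
  set g : ι → EuclideanSpace ℝ (Fin d) → ℝ := fun i x =>
    Finset.univ.sup' Finset.univ_nonempty (fun j => a i j + ⟪v i j, x⟫) with hgdef
  have hfle : ∀ (x : EuclideanSpace ℝ (Fin d)) (i : ι), f x ≤ g i x := fun x i => by
    rw [hf x]
    exact Finset.inf'_le _ (Finset.mem_univ i)
  have hpiece : ∀ i : ι, ∃ τ > (0:ℝ), ∀ x : EuclideanSpace ℝ (Fin d), ‖x‖ ≤ r → g i x = f x →
      τ * Metric.infDist x S ≤ max (f x) 0 := by
    intro i
    by_cases hSi : {x : EuclideanSpace ℝ (Fin d) | g i x ≤ 0}.Nonempty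
    · obtain ⟨τ, hτ, hτb⟩ := hoffman (a i) (v i) hSi
      refine ⟨τ, hτ, fun x hxr hgi => ?_⟩
      have hsub : {x : EuclideanSpace ℝ (Fin d) | g i x ≤ 0} ⊆ S := fun y hy => le_trans (hfle y i) hy
      have h1 : Metric.infDist x S ≤ Metric.infDist x {x : EuclideanSpace ℝ (Fin d) | g i x ≤ 0} :=
        Metric.infDist_le_infDist_of_subset hsub hSi
      calc τ * Metric.infDist x S ≤ τ * Metric.infDist x {x : EuclideanSpace ℝ (Fin d) | g i x ≤ 0} :=
            mul_le_mul_of_nonneg_left h1 hτ.le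
        _ ≤ max (g i x) 0 := hτb x
        _ = max (f x) 0 := by rw [hgi]
    · have hgpos : ∀ x : EuclideanSpace ℝ (Fin d), 0 < g i x := fun x => not_le.1 (fun h => hSi ⟨x, h⟩)
      have hcont : Continuous (g i) := by
        apply Continuous.finset_sup'_apply Finset.univ_nonempty
        intro j _
        exact continuous_const.add (Continuous.inner continuous_const continuous_id)
      obtain ⟨x₁, hx₁mem, hx₁min⟩ := (isCompact_closedBall (0:EuclideanSpace ℝ (Fin d)) r).exists_isMinOn
        ⟨0, Metric.mem_closedBall_self hr.le⟩ hcont.continuousOn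
      set m := g i x₁ with hm
      have hmpos : 0 < m := hgpos x₁
      have hRpos : (0:ℝ) < r + ‖x₀‖ + 1 := by positivity
      refine ⟨m / (r + ‖x₀‖ + 1), by positivity, fun x hxr hgi => ?_⟩
      have hdle : Metric.infDist x S ≤ r + ‖x₀‖ := by
        calc Metric.infDist x S ≤ dist x x₀ := Metric.infDist_le_dist_of_mem hx₀
          _ ≤ ‖x‖ + ‖x₀‖ := by rw [dist_eq_norm]; exact norm_sub_le x x₀
          _ ≤ r + ‖x₀‖ := by linarith
      have hmle : m ≤ f x := by
        rw [← hgi]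
        exact hx₁min (by rwa [Metric.mem_closedBall, dist_zero_right])
      have hd0 : 0 ≤ Metric.infDist x S := Metric.infDist_nonneg
      calc (m / (r + ‖x₀‖ + 1)) * Metric.infDist x S
          ≤ (m / (r + ‖x₀‖ + 1)) * (r + ‖x₀‖) :=
            mul_le_mul_of_nonneg_left hdle (by positivity)
        _ ≤ m := by
            rw [div_mul_eq_mul_div, div_le_iff₀ hRpos]
            nlinarith
        _ ≤ f x := hmle
        _ ≤ max (f x) 0 := le_max_left _ _
  choose τp hτppos hτpb using hpiece
  set τ1 := Finset.univ.inf' Finset.univ_nonempty τp with hτ1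
  have hτ1pos : 0 < τ1 := by
    rw [hτ1, Finset.lt_inf'_iff]
    exact fun i _ => hτppos i
  have hrx₀ : (0:ℝ) < r + ‖x₀‖ := by positivity
  set τ2 := c * r / (r + ‖x₀‖) with hτ2
  have hτ2pos : 0 < τ2 := by positivity
  refine ⟨min τ1 τ2, lt_min hτ1pos hτ2pos, fun x hxV => ?_⟩
  have hd0 : 0 ≤ Metric.infDist x S := Metric.infDist_nonneg
  by_cases hxr : r ≤ ‖x‖
  · have hfx : c * ‖x‖ ≤ f x := hgrow x hxV hxr
    have hxpos : 0 < ‖x‖ := lt_of_lt_of_le hr hxr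
    have hfxpos : 0 < f x := lt_of_lt_of_le (by positivity) hfx
    have hdle : Metric.infDist x S ≤ ‖x‖ + ‖x₀‖ := by
      calc Metric.infDist x S ≤ dist x x₀ := Metric.infDist_le_dist_of_mem hx₀
        _ ≤ ‖x‖ + ‖x₀‖ := by rw [dist_eq_norm]; exact norm_sub_le x x₀
    calc (min τ1 τ2) * Metric.infDist x S ≤ τ2 * Metric.infDist x S :=
          mul_le_mul_of_nonneg_right (min_le_right _ _) hd0
      _ ≤ τ2 * (‖x‖ + ‖x₀‖) := mul_le_mul_of_nonneg_left hdle hτ2pos.le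
      _ ≤ c * ‖x‖ := by
          rw [hτ2, div_mul_eq_mul_div, div_le_iff₀ hrx₀]
          nlinarith [mul_nonneg (mul_nonneg hc.le (sub_nonneg.2 hxr)) (norm_nonneg x₀)]
      _ ≤ f x := hfx
      _ ≤ max (f x) 0 := le_max_left _ _
  · push_neg at hxr
    obtain ⟨i, _, hieq⟩ := Finset.exists_mem_eq_inf' (Finset.univ_nonempty (α := ι))
      (fun i => g i x)
    have hgif : g i x = f x := by rw [hf x]; exact hieq.symm
    calc (min τ1 τ2) * Metric.infDist x S ≤ τp i * Metric.infDist x S := by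
          apply mul_le_mul_of_nonneg_right _ hd0
          exact le_trans (min_le_left _ _) (Finset.inf'_le _ (Finset.mem_univ i))
      _ ≤ max (f x) 0 := hτpb i x hxr.le hgif
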